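/- arXiv:2502.18876 — 3 statements merged into one kernel-verified Lean document; each statement's English description precedes it below -/
import Mathlib

section
/- A function f in ℱ is an extreme point of ℱ if and only if there exists an up-set A ⊆ [0,1]^n such that f equals the indicator function 1_A almost everywhere (with respect to Lebesgue measure on [0,1]^n). -/
open MeasureTheory

noncomputable section

/-- The closed unit cube `[0,1]^n` in `ℝⁿ`. -/
def cube (n : ℕ) : Set (Fin n → ℝ) := Set.Icc 0 1

/-- `f` restricted to the cube is a monotone function with values in `[0,1]`. -/
def IsMonoCube (n : ℕ) (f : (Fin n → ℝ) → ℝ) : Prop :=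
  (∀ x ∈ cube n, f x ∈ Set.Icc (0 : ℝ) 1) ∧
  ∀ x ∈ cube n, ∀ y ∈ cube n, x ≤ y → f x ≤ f y

/-- `A` is an up-set of the cube `[0,1]^n`. -/
def UpSetIn (n : ℕ) (A : Set (Fin n → ℝ)) : Prop :=
  A ⊆ cube n ∧ ∀ x ∈ A, ∀ y ∈ cube n, x ≤ y → y ∈ A

/-- `f` is an extreme point of the set `S` of functions on the cube, where functions
equal almost everywhere (w.r.t. Lebesgue measure on the cube) are identified. -/
def ExtremePtF (n : ℕ) (S : Set ((Fin n → ℝ) → ℝ)) (f : (Fin n → ℝ) → ℝ) : Prop :=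
  f ∈ S ∧ ∀ g ∈ S, ∀ h ∈ S, ∀ l : ℝ, 0 < l → l < 1 →
    (f =ᵐ[volume.restrict (cube n)] fun x => l * g x + (1 - l) * h x) →
    g =ᵐ[volume.restrict (cube n)] h

/-- Choquet: `f ∈ ℱ` is an extreme point of `ℱ` iff `f` equals the
indicator function of an up-set `A ⊆ [0,1]^n` almost everywhere. -/
theorem stmt0 (n : ℕ) (hn : 1 ≤ n) (f : (Fin n → ℝ) → ℝ) (hf : IsMonoCube n f) :
    ExtremePtF n {g | IsMonoCube n g} f ↔
      ∃ A : Set (Fin n → ℝ), UpSetIn n A ∧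
        f =ᵐ[volume.restrict (cube n)] A.indicator 1 := by
  have hcube : MeasurableSet (cube n) := measurableSet_Icc
  constructor
  · rintro ⟨hfS, hext⟩
    set g : (Fin n → ℝ) → ℝ := fun x => min (2 * f x) 1 with hgdef
    set h : (Fin n → ℝ) → ℝ := fun x => max (2 * f x - 1) 0 with hhdef
    have hgS : IsMonoCube n g := by
      constructor
      · intro x hx
        obtain ⟨h0, h1⟩ := hf.1 x hx
        exact ⟨le_min (by linarith) (by norm_num), min_le_right _ _⟩
      · intro x hx y hy hxy
        have := hf.2 x hx y hy hxy
        exact min_le_min (by linarith) le_rfl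
    have hhS : IsMonoCube n h := by
      constructor
      · intro x hx
        obtain ⟨h0, h1⟩ := hf.1 x hx
        exact ⟨le_max_right _ _, max_le (by linarith) (by norm_num)⟩
      · intro x hx y hy hxy
        have := hf.2 x hx y hy hxy
        exact max_le_max (by linarith) le_rfl
    have hdecomp : ∀ x, f x = (1/2 : ℝ) * g x + (1 - 1/2) * h x := by
      intro x
      rcases le_total (2 * f x) 1 with h1 | h1
      · rw [hgdef, hhdef]; simp only
        rw [min_eq_left h1, max_eq_right (by linarith)]; ring
      · rw [hgdef, hhdef]; simp only
        rw [min_eq_right h1, max_eq_left (by linarith)]; ring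
    have hgh := hext g hgS h hhS (1/2) (by norm_num) (by norm_num)
      (Filter.Eventually.of_forall hdecomp)
    refine ⟨{x | x ∈ cube n ∧ f x = 1}, ⟨fun x hx => hx.1, ?_⟩, ?_⟩
    · rintro x ⟨hxc, hx1⟩ y hy hxy
      refine ⟨hy, le_antisymm (hf.1 y hy).2 ?_⟩
      calc (1:ℝ) = f x := hx1.symm
        _ ≤ f y := hf.2 x hxc y hy hxy
    · filter_upwards [hgh, ae_restrict_mem hcube] with x hx1 hx2
      obtain ⟨h0, h1⟩ := hf.1 x hx2
      have h01 : f x = 0 ∨ f x = 1 := by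
        rcases le_total (2 * f x) 1 with hc | hc
        · left
          have : min (2 * f x) 1 = 2 * f x := min_eq_left hc
          have h2 : max (2 * f x - 1) 0 = 0 := max_eq_right (by linarith)
          have := hx1
          rw [hgdef, hhdef] at this; simp only at this
          rw [min_eq_left hc, max_eq_right (by linarith)] at this
          linarith
        · right
          have := hx1
          rw [hgdef, hhdef] at this; simp only at this
          rw [min_eq_right hc, max_eq_left (by linarith)] at this
          linarith
      rcases h01 with h01 | h01
      · have hxA : x ∉ {x | x ∈ cube n ∧ f x = 1} := by
          rintro ⟨-, hx1'⟩; rw [h01] at hx1'; norm_num at hx1'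
        rw [Set.indicator_of_notMem hxA, h01]
      · have hxA : x ∈ {x | x ∈ cube n ∧ f x = 1} := ⟨hx2, h01⟩
        rw [Set.indicator_of_mem hxA, h01]; rfl
  · rintro ⟨A, ⟨hAsub, hAup⟩, hfa⟩
    refine ⟨hf, ?_⟩
    intro g hg h hh l hl0 hl1 heq
    filter_upwards [hfa, heq, ae_restrict_mem hcube] with x h1 h2 h3
    obtain ⟨hg0, hg1⟩ := hg.1 x h3
    obtain ⟨hh0, hh1⟩ := hh.1 x h3
    by_cases hxA : x ∈ A
    · have hi : f x = 1 := by rw [h1, Set.indicator_of_mem hxA]; rfl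
      have key : l * (1 - g x) + (1 - l) * (1 - h x) = 0 := by
        have := h2; rw [hi] at this; linear_combination this
      have p1 : 0 ≤ l * (1 - g x) := mul_nonneg hl0.le (by linarith)
      have p2 : 0 ≤ (1 - l) * (1 - h x) := mul_nonneg (by linarith) (by linarith)
      have e1 : l * (1 - g x) = 0 := by linarith
      have e2 : (1 - l) * (1 - h x) = 0 := by linarith
      have : (1 - g x) = 0 := by
        rcases mul_eq_zero.mp e1 with hc | hc
        · exact absurd hc (ne_of_gt hl0)
        · exact hc
      have : (1 - h x) = 0 := by
        rcases mul_eq_zero.mp e2 with hc | hc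
        · exact absurd hc (ne_of_gt (by linarith : (0:ℝ) < 1 - l))
        · exact hc
      linarith [(mul_eq_zero.mp e1).resolve_left (ne_of_gt hl0),
        (mul_eq_zero.mp e2).resolve_left (ne_of_gt (by linarith : (0:ℝ) < 1 - l))]
    · have hi : f x = 0 := by rw [h1, Set.indicator_of_notMem hxA]
      have key : l * g x + (1 - l) * h x = 0 := by rw [← h2, hi]
      have p1 : 0 ≤ l * g x := mul_nonneg hl0.le hg0
      have p2 : 0 ≤ (1 - l) * h x := mul_nonneg (by linarith) hh0
      have e1 : l * g x = 0 := by linarith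
      have e2 : (1 - l) * h x = 0 := by linarith
      have q1 := (mul_eq_zero.mp e1).resolve_left (ne_of_gt hl0)
      have q2 := (mul_eq_zero.mp e2).resolve_left (ne_of_gt (by linarith : (0:ℝ) < 1 - l))
      rw [q1, q2]
end
end

section
/- Let φ¹,…,φᵐ : [0,1]^n → ℝ be essentially bounded measurable functions and η¹,…,ηᵐ ∈ ℝ, and let ℱ̄ = { f ∈ ℱ : ∫_{[0,1]^n} f(x) φʲ(x) dx ≤ ηʲ for all j = 1,…,m }. Then every extreme point f of ℱ̄ satisfies: there exist nested up-sets A_1 ⊆ A_2 ⊆ ⋯ ⊆ A_{m+1} of [0,1]^n and weights λ_1,…,λ_{m+1} ≥ 0 with λ_1 + ⋯ + λ_{m+1} = 1 such that f = Σ_{j=1}^{m+1} λ_j · 1_{A_j} almost everywhere. -/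
open MeasureTheory

noncomputable section

lemma cube_meas (n : ℕ) : MeasurableSet (cube n) := measurableSet_Icc

lemma mono_aemeasurable (n : ℕ) (f : (Fin n → ℝ) → ℝ)
    (h0 : ∀ x ∈ cube n, f x ∈ Set.Icc (0:ℝ) 1)
    (hm : ∀ x ∈ cube n, ∀ y ∈ cube n, x ≤ y → f x ≤ f y) :
    AEMeasurable f (volume.restrict (cube n)) := by
  classical
  set μ := volume.restrict (cube n) with hμ
  set U : ℚ → Set (Fin n → ℝ) := fun q => ↑(upperClosure {x | x ∈ cube n ∧ (q:ℝ) < f x}) with hU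
  have hUup : ∀ q, IsUpperSet (U q) := fun q => (upperClosure _).upper
  have hUnull : ∀ q : ℚ, μ (U q \ interior (U q)) = 0 := by
    intro q
    have hv : volume (U q \ interior (U q)) = 0 := by
      refine measure_mono_null (fun x hx => ?_) (hUup q).null_frontier
      exact ⟨subset_closure hx.1, hx.2⟩
    exact le_antisymm (le_trans (Measure.le_iff'.1 Measure.restrict_le_self _) hv.le) zero_le
  have hmem : ∀ q : ℚ, ∀ x ∈ cube n, (x ∈ U q ↔ (q:ℝ) < f x) := by
    intro q x hx
    constructor
    · rintro ⟨z, ⟨hz1, hz2⟩, hzx⟩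
      exact lt_of_lt_of_le hz2 (hm z hz1 x hx hzx)
    · intro h
      exact subset_upperClosure ⟨hx, h⟩
  set g : (Fin n → ℝ) → ℝ :=
    fun x => ⨆ q : ℚ, if 0 ≤ q ∧ x ∈ interior (U q) then (q:ℝ) else 0 with hg
  have hb : ∀ x, ∀ q : ℚ, (if 0 ≤ q ∧ x ∈ interior (U q) then (q:ℝ) else 0) ≤ 1 := by
    intro x q
    split
    · next hc =>
      obtain ⟨z, ⟨hz1, hz2⟩, -⟩ := interior_subset hc.2
      exact le_trans (le_of_lt hz2) (h0 z hz1).2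
    · norm_num
  have hbdd : ∀ x, BddAbove (Set.range fun q : ℚ =>
      (if 0 ≤ q ∧ x ∈ interior (U q) then (q:ℝ) else 0)) := by
    intro x
    exact ⟨1, by rintro y ⟨q, rfl⟩; exact hb x q⟩
  have hgmeas : Measurable g := by
    refine Measurable.iSup fun q => ?_
    by_cases hq : 0 ≤ q
    · simp only [hq, true_and]
      exact Measurable.ite isOpen_interior.measurableSet measurable_const measurable_const
    · simp [hq]
  refine ⟨g, hgmeas, ?_⟩
  have h1 : ∀ᵐ x ∂μ, x ∈ cube n := ae_restrict_mem (cube_meas n)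
  have h2 : ∀ᵐ x ∂μ, ∀ q : ℚ, x ∉ U q \ interior (U q) := by
    rw [ae_all_iff]
    intro q
    exact measure_eq_zero_iff_ae_notMem.mp (hUnull q)
  filter_upwards [h1, h2] with x hx hx2
  have key : ∀ q : ℚ, (x ∈ interior (U q) ↔ (q:ℝ) < f x) := by
    intro q
    constructor
    · intro h; exact (hmem q x hx).1 (interior_subset h)
    · intro h
      have hxU : x ∈ U q := (hmem q x hx).2 h
      by_contra hni
      exact hx2 q ⟨hxU, hni⟩
  have hfx0 : 0 ≤ f x := (h0 x hx).1
  have hg0 : 0 ≤ g x := by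
    have := le_ciSup (hbdd x) (0 : ℚ)
    simpa using le_trans (by split <;> norm_num) this
  refine le_antisymm ?_ ?_
  · refine le_of_forall_lt fun c hc => ?_
    rcases le_or_gt (f x) 0 with h|h
    · exact lt_of_lt_of_le (by linarith) hg0
    · obtain ⟨q, hq1, hq2⟩ := exists_rat_btwn (max_lt hc h)
      have hq0 : (0:ℝ) ≤ (q:ℝ) := le_of_lt (lt_of_le_of_lt (le_max_right c 0) hq1)
      have hterm : (if 0 ≤ q ∧ x ∈ interior (U q) then (q:ℝ) else 0) = (q:ℝ) := by
        rw [if_pos ⟨by exact_mod_cast hq0, (key q).2 hq2⟩]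
      calc c ≤ max c 0 := le_max_left _ _
        _ < (q:ℝ) := hq1
        _ = _ := hterm.symm
        _ ≤ g x := le_ciSup (hbdd x) q
  · refine ciSup_le fun q => ?_
    split
    · next hc => exact le_of_lt ((key q).1 hc.2)
    · exact hfx0

lemma rep_lemma (n m : ℕ) (f : (Fin n → ℝ) → ℝ)
    (h0 : ∀ x ∈ cube n, f x ∈ Set.Icc (0:ℝ) 1)
    (hm : ∀ x ∈ cube n, ∀ y ∈ cube n, x ≤ y → f x ≤ f y)
    (W : Finset ℝ) (hW0 : (0:ℝ) ∈ W) (hW1 : (1:ℝ) ∈ W)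
    (hWsub : ∀ w ∈ W, w ∈ Set.Icc (0:ℝ) 1)
    (hcard : W.card ≤ m + 2)
    (hae : ∀ᵐ x ∂(volume.restrict (cube n)), f x ∈ (W : Set ℝ)) :
    ∃ (A : Fin (m + 1) → Set (Fin n → ℝ)) (lam : Fin (m + 1) → ℝ),
      (∀ j, UpSetIn n (A j)) ∧
      (∀ j k, j ≤ k → A j ⊆ A k) ∧
      (∀ j, 0 ≤ lam j) ∧ (∑ j, lam j) = 1 ∧
      f =ᵐ[volume.restrict (cube n)] fun x => ∑ j, lam j * (A j).indicator 1 x := by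
  classical
  obtain ⟨k, hk⟩ : ∃ k, W.card = k + 1 := by
    have : W.card ≠ 0 := by
      intro h; rw [Finset.card_eq_zero] at h; subst h; simp at hW0
    exact ⟨W.card - 1, (Nat.succ_pred_eq_of_pos (Nat.pos_of_ne_zero this)).symm⟩
  have hkm : k ≤ m + 1 := by omega
  set e := W.orderIsoOfFin hk with he
  set w : ℕ → ℝ := fun i => (e ⟨min i k, by omega⟩ : ℝ) with hw
  have hwmono : Monotone w := by
    intro a b hab
    exact_mod_cast e.monotone (by simpa using min_le_min_right k hab)
  have hwmem : ∀ i, w i ∈ W := fun i => (e _).2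
  have hw0 : w 0 = 0 := by
    have h1 : w 0 ≤ 0 := by
      obtain ⟨j, hj⟩ := e.surjective ⟨0, hW0⟩
      have h2 := e.monotone (Fin.zero_le j)
      rw [hj] at h2
      have h3 : (⟨min 0 k, by omega⟩ : Fin (k+1)) = 0 := Fin.ext (by simp)
      have h2' : ((e 0 : ℝ)) ≤ (((⟨0, hW0⟩ : {x // x ∈ W}) : ℝ)) := Subtype.coe_le_coe.2 h2
      exact le_trans (le_of_eq (congrArg (fun t => ((e t : ℝ))) h3)) h2'
    exact le_antisymm h1 (hWsub _ (hwmem 0)).1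
  have hwtop : ∀ i, k ≤ i → w i = 1 := by
    intro i hi
    have h1 : 1 ≤ w i := by
      obtain ⟨j, hj⟩ := e.surjective ⟨1, hW1⟩
      have h2 := e.monotone (Fin.le_last j)
      rw [hj] at h2
      have h3 : (⟨min i k, by omega⟩ : Fin (k+1)) = Fin.last k := Fin.ext (by simp [Fin.last]; omega)
      have h2' : (((⟨1, hW1⟩ : {x // x ∈ W}) : ℝ)) ≤ ((e (Fin.last k) : ℝ)) := Subtype.coe_le_coe.2 h2
      exact le_trans h2' (le_of_eq (congrArg (fun t => ((e t : ℝ))) h3).symm)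
    exact le_antisymm (hWsub _ (hwmem i)).2 h1
  have hwsurj : ∀ v ∈ W, ∃ r ≤ k, w r = v := by
    intro v hv
    obtain ⟨j, hj⟩ := e.surjective ⟨v, hv⟩
    refine ⟨j, by omega, ?_⟩
    have h3 : (⟨min (j:ℕ) k, by omega⟩ : Fin (k+1)) = j := Fin.ext (by simp; omega)
    exact (congrArg (fun t => ((e t : ℝ))) h3).trans (congrArg Subtype.val hj)
  refine ⟨fun j => {x | x ∈ cube n ∧ w (m - (j:ℕ)) < f x},
         fun j => w (m - (j:ℕ) + 1) - w (m - (j:ℕ)), ?_, ?_, ?_, ?_, ?_⟩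
  · intro j
    exact ⟨fun x hx => hx.1, fun x hx y hy hxy => ⟨hy, lt_of_lt_of_le hx.2 (hm x hx.1 y hy hxy)⟩⟩
  · intro j j' hjj x hx
    exact ⟨hx.1, lt_of_le_of_lt (hwmono (by omega : m - (j':ℕ) ≤ m - (j:ℕ))) hx.2⟩
  · intro j
    simp only [sub_nonneg]
    exact hwmono (by omega)
  · rw [Fin.sum_univ_eq_sum_range (fun j => w (m - j + 1) - w (m - j)) (m+1)]
    calc ∑ j ∈ Finset.range (m+1), (w (m - j + 1) - w (m - j))
        = ∑ j ∈ Finset.range (m+1), (fun i => w (i + 1) - w i) (m + 1 - 1 - j) := by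
          refine Finset.sum_congr rfl fun j hj => ?_
          rw [Finset.mem_range] at hj
          simp only []
          congr 2 <;> omega
      _ = ∑ i ∈ Finset.range (m+1), (w (i + 1) - w i) :=
          Finset.sum_range_reflect (fun i => w (i + 1) - w i) (m+1)
      _ = w (m+1) - w 0 := Finset.sum_range_sub w (m+1)
      _ = 1 := by rw [hw0, hwtop (m+1) (by omega)]; ring
  · filter_upwards [hae, ae_restrict_mem (measurableSet_Icc : MeasurableSet (cube n))]
      with x hxW hxc
    obtain ⟨r, hrk, hrv⟩ := hwsurj (f x) hxW
    have hex : ∃ i, ¬ w i < f x := ⟨r, by rw [hrv]; exact lt_irrefl _⟩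
    set s := Nat.find hex with hs
    have hsr : s ≤ r := Nat.find_le (by rw [hrv]; exact lt_irrefl _)
    have hws : w s = f x := by
      have h1 : ¬ w s < f x := Nat.find_spec hex
      have h2 : w s ≤ w r := hwmono hsr
      rw [hrv] at h2
      linarith [lt_or_ge (w s) (f x), h2]
    have hcharac : ∀ i, (w i < f x ↔ i < s) := by
      intro i
      constructor
      · intro h
        by_contra hi
        push_neg at hi
        exact absurd (lt_of_le_of_lt (hws ▸ hwmono hi) h) (lt_irrefl _)
      · intro h
        by_contra hni
        exact Nat.find_min hex h hni
    have hsm : s ≤ m + 1 := by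
      by_contra hc
      push_neg at hc
      have := (hcharac (m+1)).2 (by omega)
      rw [hwtop (m+1) (by omega)] at this
      exact absurd (lt_of_le_of_lt (hWsub _ hxW).2 this) (lt_irrefl _)
    have hind : ∀ j : Fin (m+1),
        (Set.indicator {y | y ∈ cube n ∧ w (m - (j:ℕ)) < f y} (1 : (Fin n → ℝ) → ℝ) x)
          = if w (m - (j:ℕ)) < f x then 1 else 0 := by
      intro j
      by_cases h : w (m - (j:ℕ)) < f x <;> simp [Set.indicator_apply, h, hxc]
    calc f x = w s - w 0 := by rw [hws, hw0, sub_zero]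
      _ = ∑ i ∈ Finset.range s, (w (i+1) - w i) := (Finset.sum_range_sub w s).symm
      _ = ∑ i ∈ Finset.range s, (if w i < f x then w (i+1) - w i else 0) := by
          refine Finset.sum_congr rfl fun i hi => ?_
          rw [Finset.mem_range] at hi
          rw [if_pos ((hcharac i).2 hi)]
      _ = ∑ i ∈ Finset.range s, (if w i < f x then w (i+1) - w i else 0)
          + ∑ i ∈ Finset.Ico s (m+1), (if w i < f x then w (i+1) - w i else 0) := by
          have : ∀ i ∈ Finset.Ico s (m+1), (if w i < f x then w (i+1) - w i else 0) = 0 := by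
            intro i hi
            rw [Finset.mem_Ico] at hi
            have hni : ¬ w i < f x := fun hc => absurd ((hcharac i).1 hc) (by omega)
            rw [if_neg hni]
          rw [Finset.sum_congr rfl this, Finset.sum_const_zero, add_zero]
      _ = ∑ i ∈ Finset.range (m+1), (if w i < f x then w (i+1) - w i else 0) :=
          Finset.sum_range_add_sum_Ico _ hsm
      _ = ∑ j ∈ Finset.range (m+1),
            (fun i => if w i < f x then w (i+1) - w i else 0) (m + 1 - 1 - j) :=
          (Finset.sum_range_reflect _ _).symm
      _ = ∑ j ∈ Finset.range (m+1),
            (if w (m - j) < f x then w (m - j + 1) - w (m - j) else 0) := by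
          refine Finset.sum_congr rfl fun j hj => ?_
          rw [Finset.mem_range] at hj
          simp only []
          have h1 : m + 1 - 1 - j = m - j := by omega
          rw [h1]
      _ = ∑ j : Fin (m+1), (if w (m - (j:ℕ)) < f x then w (m - (j:ℕ) + 1) - w (m - (j:ℕ)) else 0) :=
          (Fin.sum_univ_eq_sum_range _ (m+1)).symm
      _ = _ := by
          refine Finset.sum_congr rfl fun j _ => ?_
          rw [hind j]
          by_cases h : w (m - (j:ℕ)) < f x <;> simp [h]

lemma finite_values (n m : ℕ)
    (φ : Fin m → (Fin n → ℝ) → ℝ)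
    (hmeas : ∀ j, Measurable (φ j))
    (hbdd : ∀ j, ∃ C : ℝ, ∀ᵐ x ∂(volume.restrict (cube n)), |φ j x| ≤ C)
    (η : Fin m → ℝ)
    (f : (Fin n → ℝ) → ℝ)
    (hf : ExtremePtF n
      {g | IsMonoCube n g ∧ ∀ j, (∫ x in cube n, g x * φ j x) ≤ η j} f) :
    ∃ W : Finset ℝ, (0:ℝ) ∈ W ∧ (1:ℝ) ∈ W ∧ (∀ w ∈ W, w ∈ Set.Icc (0:ℝ) 1) ∧
      W.card ≤ m + 2 ∧ ∀ᵐ x ∂(volume.restrict (cube n)), f x ∈ (W : Set ℝ) := by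
  classical
  set μ := volume.restrict (cube n) with hμdef
  haveI : IsFiniteMeasure μ := by
    constructor
    rw [hμdef, Measure.restrict_apply_univ]
    exact (isCompact_Icc).measure_lt_top
  obtain ⟨⟨h0, hm⟩, hconstr⟩ := hf.1
  have haem : AEMeasurable f μ := mono_aemeasurable n f h0 hm
  have hbound : ∀ᵐ x ∂μ, f x ∈ Set.Icc (0:ℝ) 1 :=
    (ae_restrict_mem (measurableSet_Icc : MeasurableSet (cube n))).mono fun x hx => h0 x hx
  -- integrability helper
  have hint : ∀ (r : (Fin n → ℝ) → ℝ) (B : ℝ), AEMeasurable r μ →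
      (∀ᵐ x ∂μ, |r x| ≤ B) → ∀ j, Integrable (fun x => r x * φ j x) μ := by
    intro r B hr hrB j
    obtain ⟨C, hC⟩ := hbdd j
    refine Integrable.mono' (integrable_const (B * C))
      ((hr.mul (hmeas j).aemeasurable).aestronglyMeasurable) ?_
    filter_upwards [hrB, hC] with x h1 h2
    rw [Real.norm_eq_abs, abs_mul]
    exact mul_le_mul h1 h2 (abs_nonneg _) (le_trans (abs_nonneg _) h1)
  -- essential values
  set V : Set ℝ := {v : ℝ | ∀ ε > 0, 0 < μ {x | |f x - v| < ε}} with hV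
  -- main claim: at most m essential values strictly inside (0,1)
  have hT : ∀ T : Finset ℝ, ↑T ⊆ V ∩ Set.Ioo (0:ℝ) 1 → T.card ≤ m := by
    intro T hTsub
    by_contra hTc
    push_neg at hTc
    obtain ⟨T', hT'sub, hT'card⟩ := Finset.exists_subset_card_eq hTc
    set ev := T'.orderIsoOfFin hT'card with hev
    set v : Fin (m+1) → ℝ := fun i => (ev i : ℝ) with hvdef
    have hvmem : ∀ i, v i ∈ V ∩ Set.Ioo (0:ℝ) 1 := fun i => hTsub (hT'sub (ev i).2)
    have hvinj : Function.Injective v := fun i j hij => by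
      have : (ev i : {x // x ∈ T'}) = ev j := Subtype.ext hij
      exact ev.injective this
    -- the separation constant δ
    set δ₁ : ℝ := Finset.univ.inf' Finset.univ_nonempty
      (fun i : Fin (m+1) => min (v i) (1 - v i)) with hδ₁
    set δ₂ : ℝ := Finset.univ.inf' Finset.univ_nonempty
      (fun p : Fin (m+1) × Fin (m+1) => if p.1 = p.2 then 1 else |v p.1 - v p.2| / 2) with hδ₂
    set δ : ℝ := min δ₁ δ₂ with hδdef
    have hδpos : 0 < δ := by
      rw [hδdef, lt_min_iff]
      constructor
      · rw [hδ₁, Finset.lt_inf'_iff]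
        intro i _
        have := hvmem i
        rw [lt_min_iff]
        exact ⟨this.2.1, by linarith [this.2.2]⟩
      · rw [hδ₂, Finset.lt_inf'_iff]
        rintro ⟨i, j⟩ _
        by_cases h : i = j
        · simp [h]
        · simp only [h, if_false]
          have : v i ≠ v j := fun hc => h (hvinj hc)
          have : 0 < |v i - v j| := abs_pos.2 (sub_ne_zero.2 this)
          linarith
    have hδv : ∀ i, δ ≤ v i := fun i =>
      le_trans (min_le_left _ _) (le_trans (Finset.inf'_le _ (Finset.mem_univ i)) (min_le_left _ _))
    have hδv' : ∀ i, δ ≤ 1 - v i := fun i =>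
      le_trans (min_le_left _ _) (le_trans (Finset.inf'_le _ (Finset.mem_univ i)) (min_le_right _ _))
    have hδgap : ∀ i j, i ≠ j → 2 * δ ≤ |v i - v j| := by
      intro i j hij
      have h1 : δ ≤ |v i - v j| / 2 := by
        refine le_trans (min_le_right _ _) (le_trans (Finset.inf'_le _ (Finset.mem_univ (i, j))) ?_)
        simp [hij]
      linarith
    -- tent functions
    set ρi : Fin (m+1) → ℝ → ℝ := fun i t => max (δ - |t - v i|) 0 with hρi
    have hρicont : ∀ i, Continuous (ρi i) := by
      intro i
      exact (continuous_const.sub ((continuous_id.sub continuous_const).abs)).max continuous_const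
    have hρi01 : ∀ i t, 0 ≤ ρi i t ∧ ρi i t ≤ δ := by
      intro i t
      refine ⟨le_max_right _ _, max_le (by linarith [abs_nonneg (t - v i)]) (le_of_lt hδpos)⟩
    have hρilip : ∀ i s t, |ρi i s - ρi i t| ≤ |s - t| := by
      intro i s t
      refine le_trans (abs_max_sub_max_le_abs _ _ _) ?_
      have h1 : (δ - |s - v i|) - (δ - |t - v i|) = -(|s - v i| - |t - v i|) := by ring
      rw [h1, abs_neg]
      refine le_trans (abs_abs_sub_abs_le_abs_sub _ _) ?_
      rw [show (s - v i) - (t - v i) = s - t by ring]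
    have hρizero : ∀ i, ρi i 0 = 0 ∧ ρi i 1 = 0 := by
      intro i
      have h1 := hδv i
      have h2 := hδv' i
      have h3 := (hvmem i).2.1
      have h4 := (hvmem i).2.2
      constructor
      · apply max_eq_right
        rw [show (0:ℝ) - v i = -(v i) by ring, abs_neg, abs_of_pos h3]
        linarith
      · apply max_eq_right
        rw [abs_of_pos (by linarith : (0:ℝ) < 1 - v i)]
        linarith
    -- each tent composed with f is integrable against φ j
    have hρiae : ∀ i, AEMeasurable (fun x => ρi i (f x)) μ :=
      fun i => ((hρicont i).measurable).comp_aemeasurable haem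
    have hMint : ∀ i j, Integrable (fun x => ρi i (f x) * φ j x) μ := by
      intro i j
      exact hint _ δ (hρiae i)
        (Filter.Eventually.of_forall fun x => by
          rw [abs_of_nonneg (hρi01 i (f x)).1]; exact (hρi01 i (f x)).2) j
    -- the matrix of moments
    set M : Matrix (Fin m) (Fin (m+1)) ℝ := fun j i => ∫ x in cube n, ρi i (f x) * φ j x with hM
    -- nontrivial kernel
    obtain ⟨c, hcker, hcne⟩ : ∃ c : Fin (m+1) → ℝ, M.mulVecLin c = 0 ∧ c ≠ 0 := by
      have hni : ¬ Function.Injective M.mulVecLin := by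
        intro hinj
        have h1 := LinearMap.finrank_le_finrank_of_injective hinj
        rw [Module.finrank_fin_fun, Module.finrank_fin_fun] at h1
        omega
      rw [← LinearMap.ker_eq_bot] at hni
      obtain ⟨c, hc1, hc2⟩ := Submodule.exists_mem_ne_zero_of_ne_bot hni
      exact ⟨c, LinearMap.mem_ker.1 hc1, hc2⟩
    have hker : ∀ j, ∑ i, M j i * c i = 0 := by
      intro j
      have := congrFun hcker j
      simpa [Matrix.mulVecLin_apply, Matrix.mulVec, dotProduct] using this
    -- the combined perturbation
    set Lc : ℝ := ∑ i, |c i| with hLc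
    have hLcpos : 0 < Lc := by
      obtain ⟨i0, hi0⟩ := Function.ne_iff.1 hcne
      have h1 : |c i0| ≤ Lc := Finset.single_le_sum (f := fun i => |c i|)
        (fun i _ => abs_nonneg _) (Finset.mem_univ i0)
      have h2 : 0 < |c i0| := abs_pos.2 hi0
      linarith
    set ε : ℝ := 1 / (2 * Lc) with hε
    have hεpos : 0 < ε := by rw [hε]; positivity
    have hεLc : ε * Lc = 1/2 := by rw [hε]; field_simp
    set ρ : ℝ → ℝ := fun t => ∑ i, c i * ρi i t with hρ
    have hρcont : Continuous ρ := continuous_finset_sum _ fun i _ => (continuous_const.mul (hρicont i))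
    have hρlip : ∀ s t, |ρ s - ρ t| ≤ Lc * |s - t| := by
      intro s t
      rw [hρ]
      calc |(∑ i, c i * ρi i s) - ∑ i, c i * ρi i t|
          = |∑ i, (c i * ρi i s - c i * ρi i t)| := by rw [Finset.sum_sub_distrib]
        _ ≤ ∑ i, |c i * ρi i s - c i * ρi i t| := Finset.abs_sum_le_sum_abs _ _
        _ ≤ ∑ i, |c i| * |s - t| := by
            refine Finset.sum_le_sum fun i _ => ?_
            rw [← mul_sub, abs_mul]
            exact mul_le_mul_of_nonneg_left (hρilip i s t) (abs_nonneg _)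
        _ = Lc * |s - t| := by rw [← Finset.sum_mul]
    have hρzero : ρ 0 = 0 ∧ ρ 1 = 0 := by
      constructor <;>
        · rw [hρ]
          refine Finset.sum_eq_zero fun i _ => ?_
          first
            | rw [(hρizero i).1, mul_zero]
            | rw [(hρizero i).2, mul_zero]
    have hρbd : ∀ t, |ρ t| ≤ Lc := by
      intro t
      have hδ1 : δ ≤ 1 := by
        have h1 := hδv' 0
        have h2 := (hvmem 0).2.1
        linarith
      rw [hρ]
      calc |∑ i, c i * ρi i t| ≤ ∑ i, |c i * ρi i t| := Finset.abs_sum_le_sum_abs _ _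
        _ ≤ ∑ i, |c i| := by
            refine Finset.sum_le_sum fun i _ => ?_
            rw [abs_mul]
            have h3 := hρi01 i t
            calc |c i| * |ρi i t| ≤ |c i| * 1 := by
                  refine mul_le_mul_of_nonneg_left ?_ (abs_nonneg _)
                  rw [abs_of_nonneg h3.1]
                  linarith [h3.2]
              _ = |c i| := mul_one _
        _ = Lc := rfl
    -- zero integrals
    have hρint : ∀ j, ∫ x in cube n, ρ (f x) * φ j x = 0 := by
      intro j
      have heq : (fun x => ρ (f x) * φ j x) = fun x => ∑ i, c i * (ρi i (f x) * φ j x) := by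
        funext x
        rw [hρ, Finset.sum_mul]
        exact Finset.sum_congr rfl fun i _ => by ring
      rw [heq, integral_finset_sum _ (fun i _ => (hMint i j).const_mul (c i))]
      refine Eq.trans (Finset.sum_congr rfl fun i _ => ?_) (hker j)
      rw [integral_const_mul, mul_comm]
    -- the membership helper
    have hmember : ∀ r : ℝ → ℝ, Continuous r →
        (∀ s t, |r s - r t| ≤ Lc * |s - t|) → r 0 = 0 → r 1 = 0 →
        (∀ j, ∫ x in cube n, r (f x) * φ j x = 0) →
        (fun x => f x + ε * r (f x)) ∈
          {g | IsMonoCube n g ∧ ∀ j, (∫ x in cube n, g x * φ j x) ≤ η j} := by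
      intro r hrc hrlip hr0 hr1 hrint
      have hpsi : ∀ a b : ℝ, a ≤ b → a + ε * r a ≤ b + ε * r b := by
        intro a b hab
        have h1 : r a - r b ≤ Lc * (b - a) := by
          have := hrlip a b
          rw [abs_sub_comm a b, abs_of_nonneg (by linarith : (0:ℝ) ≤ b - a)] at this
          calc r a - r b ≤ |r a - r b| := le_abs_self _
            _ ≤ Lc * (b - a) := this
        have h2 : ε * (r a - r b) ≤ ε * (Lc * (b - a)) :=
          mul_le_mul_of_nonneg_left h1 (le_of_lt hεpos)
        have h3 : ε * (Lc * (b - a)) = (b - a) / 2 := by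
          rw [← mul_assoc, hεLc]; ring
        linarith
      have hrb : ∀ t, t ∈ Set.Icc (0:ℝ) 1 → 0 ≤ t + ε * r t ∧ t + ε * r t ≤ 1 := by
        intro t ht
        constructor
        · have := hpsi 0 t ht.1
          rw [hr0] at this
          simpa using this
        · have := hpsi t 1 ht.2
          rw [hr1] at this
          simpa using this
      refine ⟨⟨fun x hx => ⟨(hrb (f x) (h0 x hx)).1, (hrb (f x) (h0 x hx)).2⟩,
        fun x hx y hy hxy => hpsi (f x) (f y) (hm x hx y hy hxy)⟩, ?_⟩
      intro j
      have hrfb : ∀ᵐ x ∂μ, |r (f x)| ≤ Lc := by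
        filter_upwards [hbound] with x hx
        have := hrlip (f x) 0
        rw [hr0, sub_zero, sub_zero] at this
        refine le_trans this ?_
        rw [abs_of_nonneg hx.1]
        nlinarith [hx.2, hLcpos]
      have hi1 : Integrable (fun x => f x * φ j x) μ := by
        refine hint f 1 haem ?_ j
        filter_upwards [hbound] with x hx
        rw [abs_of_nonneg hx.1]; exact hx.2
      have hi2 : Integrable (fun x => r (f x) * φ j x) μ :=
        hint _ Lc (hrc.measurable.comp_aemeasurable haem) hrfb j
      have heq : (fun x => (f x + ε * r (f x)) * φ j x)
          = fun x => f x * φ j x + ε * (r (f x) * φ j x) := by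
        funext x; ring
      rw [heq, integral_add hi1 (hi2.const_mul ε), integral_const_mul, hrint j, mul_zero, add_zero]
      exact hconstr j
    -- apply extremality
    have hgmem := hmember ρ hρcont hρlip hρzero.1 hρzero.2 hρint
    have hhmem := hmember (fun t => -ρ t) (hρcont.neg)
      (fun s t => by rw [show -ρ s - -ρ t = -(ρ s - ρ t) by ring, abs_neg]; exact hρlip s t)
      (by show -ρ 0 = 0; rw [hρzero.1, neg_zero]) (by show -ρ 1 = 0; rw [hρzero.2, neg_zero])
      (fun j => by
        have : (fun x => -ρ (f x) * φ j x) = fun x => -(ρ (f x) * φ j x) := by funext x; ring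
        rw [this, integral_neg, hρint j, neg_zero])
    have hfeq : f =ᵐ[μ] fun x => (1/2 : ℝ) * (f x + ε * ρ (f x))
        + (1 - 1/2) * (f x + ε * (-ρ (f x))) := by
      refine Filter.Eventually.of_forall fun x => ?_
      ring
    have hgh := hf.2 _ hgmem _ hhmem (1/2) (by norm_num) (by norm_num) hfeq
    have hρ0ae : ∀ᵐ x ∂μ, ρ (f x) = 0 := by
      filter_upwards [hgh] with x hx
      have hx' : f x + ε * ρ (f x) = f x + ε * -ρ (f x) := hx
      have h1 : ε * ρ (f x) = ε * -ρ (f x) := by linarith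
      have h2 := mul_left_cancel₀ (ne_of_gt hεpos) h1
      linarith
    -- contradiction with essential value
    obtain ⟨i0, hi0⟩ := Function.ne_iff.1 hcne
    have hE : 0 < μ {x | |f x - v i0| < δ/2} := (hvmem i0).1 (δ/2) (by linarith)
    have hsub : {x | |f x - v i0| < δ/2} ⊆ {x | ¬ ρ (f x) = 0} := by
      intro x hx
      simp only [Set.mem_setOf_eq] at hx ⊢
      have hval : ρ (f x) = c i0 * ρi i0 (f x) := by
        rw [hρ]
        refine Finset.sum_eq_single i0 (fun i _ hii0 => ?_) (fun h => absurd (Finset.mem_univ i0) h)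
        have h1 : 2 * δ ≤ |v i - v i0| := hδgap i i0 hii0
        have h2 : |v i - v i0| ≤ |v i - f x| + |f x - v i0| := by
          calc |v i - v i0| = |(v i - f x) + (f x - v i0)| := by ring_nf
            _ ≤ _ := abs_add_le _ _
        have h3 : δ ≤ |f x - v i| := by
          rw [abs_sub_comm]
          linarith
        have h4 : ρi i (f x) = 0 := max_eq_right (by linarith)
        rw [h4, mul_zero]
      have h5 : 0 < ρi i0 (f x) := by
        rw [hρi]
        simp only []
        rw [lt_max_iff]
        left
        linarith
      rw [hval]
      exact mul_ne_zero hi0 (ne_of_gt h5)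
    have : μ {x | |f x - v i0| < δ/2} = 0 := by
      refine measure_mono_null hsub ?_
      have := hρ0ae
      rw [ae_iff] at this
      exact this
    rw [this] at hE
    exact lt_irrefl _ hE
  -- V ∩ (0,1) is finite with at most m elements
  have hVfin : (V ∩ Set.Ioo (0:ℝ) 1).Finite := by
    by_contra hinf
    obtain ⟨T, hTsub, hTcard⟩ := Set.Infinite.exists_subset_card_eq hinf (m+1)
    have := hT T hTsub
    omega
  set W : Finset ℝ := hVfin.toFinset ∪ {0, 1} with hW
  have hWmem0 : (0:ℝ) ∈ W := by simp [hW]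
  have hWmem1 : (1:ℝ) ∈ W := by simp [hW]
  have hWsub : ∀ w ∈ W, w ∈ Set.Icc (0:ℝ) 1 := by
    intro u hu
    rw [hW, Finset.mem_union] at hu
    rcases hu with hu | hu
    · rw [Set.Finite.mem_toFinset] at hu
      exact ⟨le_of_lt hu.2.1, le_of_lt hu.2.2⟩
    · simp only [Finset.mem_insert, Finset.mem_singleton] at hu
      rcases hu with rfl | rfl
      · exact ⟨le_refl _, zero_le_one⟩
      · exact ⟨zero_le_one, le_refl _⟩
  have hWcard : W.card ≤ m + 2 := by
    refine le_trans (Finset.card_union_le _ _) ?_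
    have h1 : hVfin.toFinset.card ≤ m := by
      refine hT _ ?_
      intro u hu
      rw [Finset.mem_coe, Set.Finite.mem_toFinset] at hu
      exact hu
    have h2 : ({(0:ℝ), 1} : Finset ℝ).card ≤ 2 := Finset.card_insert_le _ _ |>.trans (by simp)
    omega
  refine ⟨W, hWmem0, hWmem1, hWsub, hWcard, ?_⟩
  -- covering argument: a.e. value lies in W
  have hD : ∀ u : ℝ, u ∈ Set.Icc (0:ℝ) 1 → u ∉ (W : Set ℝ) →
      ∃ ε > 0, μ {x | |f x - u| < ε} = 0 := by
    intro u hu1 hu2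
    have huV : u ∉ V := by
      intro huV
      apply hu2
      by_cases h01 : u = 0 ∨ u = 1
      · rcases h01 with rfl | rfl
        · exact hWmem0
        · exact hWmem1
      · push_neg at h01
        have : u ∈ V ∩ Set.Ioo (0:ℝ) 1 :=
          ⟨huV, lt_of_le_of_ne hu1.1 (Ne.symm h01.1), lt_of_le_of_ne hu1.2 h01.2⟩
        rw [hW]
        simp only [Finset.coe_union, Set.mem_union, Finset.mem_coe, Finset.mem_union]
        left
        rw [Set.Finite.mem_toFinset]
        exact this
    rw [hV, Set.mem_setOf_eq] at huV
    push_neg at huV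
    obtain ⟨ε, hε1, hε2⟩ := huV
    exact ⟨ε, hε1, le_antisymm hε2 zero_le⟩
  -- Lindelöf covering
  classical
  set D : Set ℝ := Set.Icc (0:ℝ) 1 \ (W : Set ℝ) with hDdef
  have hDex : ∀ u ∈ D, ∃ ε > 0, μ {x | |f x - u| < ε} = 0 := fun u hu => hD u hu.1 hu.2
  choose! εu hεu1 hεu2 using hDex
  set SS : Set (Set ℝ) := (fun u => Metric.ball u (εu u)) '' D with hSS
  obtain ⟨T, hTc, hTsub2, hTeq⟩ := TopologicalSpace.isOpen_sUnion_countable SS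
    (by rintro s ⟨u, -, rfl⟩; exact Metric.isOpen_ball)
  have hDcov : D ⊆ ⋃₀ T := by
    rw [hTeq]
    intro u hu
    exact ⟨Metric.ball u (εu u), ⟨u, hu, rfl⟩, Metric.mem_ball_self (hεu1 u hu)⟩
  have hnull : μ {x | f x ∈ ⋃₀ T} = 0 := by
    have heq2 : {x | f x ∈ ⋃₀ T} = ⋃ t ∈ T, {x | f x ∈ t} := by
      ext x
      simp [Set.mem_sUnion]
    rw [heq2]
    refine (measure_biUnion_null_iff hTc).2 fun t ht => ?_
    obtain ⟨u, hu, rfl⟩ := hTsub2 ht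
    have : {x | f x ∈ Metric.ball u (εu u)} = {x | |f x - u| < εu u} := by
      ext x
      simp [Metric.mem_ball, Real.dist_eq]
    rw [this]
    exact hεu2 u hu
  filter_upwards [hbound, measure_eq_zero_iff_ae_notMem.mp hnull] with x hx1 hx2
  by_contra hxW
  exact hx2 (hDcov ⟨hx1, hxW⟩)


/-- every extreme point of the set of monotone functions subject to `m`
linear inequality constraints is a.e. equal to a mixture of at most `m + 1` indicator
functions of nested up-sets. -/
theorem stmt2 (n m : ℕ) (hn : 1 ≤ n)
    (φ : Fin m → (Fin n → ℝ) → ℝ)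
    (hmeas : ∀ j, Measurable (φ j))
    (hbdd : ∀ j, ∃ C : ℝ, ∀ᵐ x ∂(volume.restrict (cube n)), |φ j x| ≤ C)
    (η : Fin m → ℝ)
    (f : (Fin n → ℝ) → ℝ)
    (hf : ExtremePtF n
      {g | IsMonoCube n g ∧ ∀ j, (∫ x in cube n, g x * φ j x) ≤ η j} f) :
    ∃ (A : Fin (m + 1) → Set (Fin n → ℝ)) (lam : Fin (m + 1) → ℝ),
      (∀ j, UpSetIn n (A j)) ∧
      (∀ j k, j ≤ k → A j ⊆ A k) ∧
      (∀ j, 0 ≤ lam j) ∧ (∑ j, lam j) = 1 ∧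
      f =ᵐ[volume.restrict (cube n)] fun x => ∑ j, lam j * (A j).indicator 1 x := by
  obtain ⟨W, h0W, h1W, hsub, hcard, hae⟩ := finite_values n m φ hmeas hbdd η f hf
  exact rep_lemma n m f hf.1.1.1 hf.1.1.2 W h0W h1W hsub hcard hae
end
end

section
/- Let φ¹,…,φᵐ : [0,1]^n → ℝ be essentially bounded measurable functions, η¹,…,ηᵐ ∈ ℝ, and let ℱ̄_sym be the set of symmetric f ∈ ℱ satisfying ∫_{[0,1]^n} f(x) φʲ(x) dx ≤ ηʲ for all j = 1,…,m. Then every extreme point f of ℱ̄_sym satisfies: there exist nested symmetric up-sets A_1 ⊆ ⋯ ⊆ A_{m+1} of [0,1]^n and weights λ_1,…,λ_{m+1} ≥ 0 with λ_1 + ⋯ + λ_{m+1} = 1 such that f = Σ_{j=1}^{m+1} λ_j · 1_{A_j} almost everywhere. -/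
open MeasureTheory

noncomputable section

/-- `f` is a symmetric function on the cube: invariant under permutations of coordinates. -/
def SymFun (n : ℕ) (f : (Fin n → ℝ) → ℝ) : Prop :=
  ∀ π : Equiv.Perm (Fin n), ∀ x ∈ cube n, f (fun i => x (π i)) = f x

/-- `A` is a symmetric subset of the cube: closed under permutations of coordinates. -/
def SymSet (n : ℕ) (A : Set (Fin n → ℝ)) : Prop :=
  ∀ π : Equiv.Perm (Fin n), ∀ x ∈ cube n, (x ∈ A ↔ (fun i => x (π i)) ∈ A)

namespace Stmt4Aux

open Filter Topology

variable {n : ℕ} {f : (Fin n → ℝ) → ℝ}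

/-- the strictly-below region inside the cube -/
def below (n : ℕ) (x : Fin n → ℝ) : Set (Fin n → ℝ) := {y | y ∈ cube n ∧ ∀ i, y i < x i}

/-- measurable (lower semicontinuous) a.e.-version of a monotone function -/
def ft (f : (Fin n → ℝ) → ℝ) (x : Fin n → ℝ) : ℝ := sSup (f '' below n x)

lemma cube_measurable : MeasurableSet (cube n) := measurableSet_Icc

lemma cube_compact : IsCompact (cube n) := by
  rw [cube, show (Set.Icc (0:Fin n → ℝ) 1) = Set.univ.pi fun i => Set.Icc 0 1 by
    rw [Set.pi_univ_Icc]; rfl]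
  exact isCompact_univ_pi fun i => isCompact_Icc

lemma vals_bdd (hmc : IsMonoCube n f) (x : Fin n → ℝ) :
    ∀ v ∈ f '' below n x, 0 ≤ v ∧ v ≤ 1 := by
  rintro v ⟨y, hy, rfl⟩
  exact ⟨(hmc.1 y hy.1).1, (hmc.1 y hy.1).2⟩

lemma bddAbove_vals (hmc : IsMonoCube n f) (x : Fin n → ℝ) : BddAbove (f '' below n x) :=
  ⟨1, fun v hv => (vals_bdd hmc x v hv).2⟩

lemma ft_nonneg (hmc : IsMonoCube n f) (x : Fin n → ℝ) : 0 ≤ ft f x :=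
  Real.sSup_nonneg fun v hv => (vals_bdd hmc x v hv).1

lemma ft_le_one (hmc : IsMonoCube n f) (x : Fin n → ℝ) : ft f x ≤ 1 :=
  Real.sSup_le (fun v hv => (vals_bdd hmc x v hv).2) one_pos.le

lemma ft_le (hmc : IsMonoCube n f) {x : Fin n → ℝ} (hx : x ∈ cube n) : ft f x ≤ f x :=
  Real.sSup_le (by
    rintro v ⟨y, hy, rfl⟩
    exact hmc.2 y hy.1 x hx (fun i => (hy.2 i).le)) (hmc.1 x hx).1

lemma le_ft (hmc : IsMonoCube n f) {x y : Fin n → ℝ} (hy : y ∈ cube n)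
    (hyx : ∀ i, y i < x i) : f y ≤ ft f x :=
  le_csSup (bddAbove_vals hmc x) ⟨y, ⟨hy, hyx⟩, rfl⟩

lemma isOpen_cone (y : Fin n → ℝ) : IsOpen {z : Fin n → ℝ | ∀ i, y i < z i} := by
  have : {z : Fin n → ℝ | ∀ i, y i < z i} = ⋂ i, {z | y i < z i} := by
    ext z; simp
  rw [this]
  exact isOpen_iInter_of_finite fun i => isOpen_lt continuous_const (continuous_apply i)

lemma lsc_ft (hmc : IsMonoCube n f) : LowerSemicontinuous (ft f) := by
  intro x a ha
  rcases lt_or_ge a 0 with h0 | h0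
  · exact Eventually.of_forall fun z => lt_of_lt_of_le h0 (ft_nonneg hmc z)
  · have hne : (f '' below n x).Nonempty := by
      by_contra h
      rw [Set.not_nonempty_iff_eq_empty] at h
      rw [ft, h, Real.sSup_empty] at ha
      linarith
    obtain ⟨v, ⟨y, hy, rfl⟩, hav⟩ := exists_lt_of_lt_csSup hne ha
    have hU : IsOpen {z : Fin n → ℝ | ∀ i, y i < z i} := isOpen_cone y
    filter_upwards [hU.mem_nhds hy.2] with z hz
    exact lt_of_lt_of_le hav (le_ft hmc hy.1 hz)

lemma measurable_ft (hmc : IsMonoCube n f) : Measurable (ft f) := (lsc_ft hmc).measurable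

/-- open up-set of points strictly above a cube point of value `> q` -/
def upo (f : (Fin n → ℝ) → ℝ) (q : ℝ) : Set (Fin n → ℝ) :=
  ⋃ y ∈ {y | y ∈ cube n ∧ q < f y}, {z | ∀ i, y i < z i}

lemma mem_upo {q : ℝ} {z : Fin n → ℝ} :
    z ∈ upo f q ↔ ∃ y, y ∈ cube n ∧ q < f y ∧ ∀ i, y i < z i := by
  simp only [upo, Set.mem_iUnion, Set.mem_setOf_eq]
  tauto

lemma isOpen_upo (q : ℝ) : IsOpen (upo f q) :=
  isOpen_biUnion fun y _ => isOpen_cone y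

lemma closure_upo_step {q r : ℝ} {z : Fin n → ℝ}
    (hz : z ∈ closure (upo f q)) (hr : 0 < r) : z + r • (1 : Fin n → ℝ) ∈ upo f q := by
  have hU : IsOpen {w : Fin n → ℝ | ∀ i, w i < z i + r} := by
    have : {w : Fin n → ℝ | ∀ i, w i < z i + r} = ⋂ i, {w | w i < z i + r} := by ext w; simp
    rw [this]
    exact isOpen_iInter_of_finite fun i => isOpen_lt (continuous_apply i) continuous_const
  have hzU : z ∈ {w : Fin n → ℝ | ∀ i, w i < z i + r} := fun i => by linarith
  obtain ⟨w, hwU, hwO⟩ := mem_closure_iff.mp hz _ hU hzU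
  obtain ⟨y, hyc, hyq, hyw⟩ := mem_upo.mp hwO
  exact mem_upo.mpr ⟨y, hyc, hyq, fun i => by
    have := hyw i; have := hwU i
    simp only [Pi.add_apply, Pi.smul_apply, Pi.one_apply, smul_eq_mul, mul_one]
    linarith⟩

lemma frontier_upo_null (f : (Fin n → ℝ) → ℝ) (q : ℝ) :
    volume (frontier (upo f q) ∩ cube n) = 0 := by
  set K := frontier (upo f q) ∩ cube n with hK
  have hKmeas : MeasurableSet K :=
    (isClosed_frontier.measurableSet).inter measurableSet_Icc
  set c : ℕ → ℝ := fun k => 1 / (k + 1) with hc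
  have hcpos : ∀ k, 0 < c k := fun k => by positivity
  have hcle : ∀ k, c k ≤ 1 := fun k => by
    rw [hc]; rw [div_le_one (by positivity)]; push_cast; linarith
  have hcmono : StrictAnti c := by
    intro a b hab
    apply one_div_lt_one_div_of_lt (by positivity)
    exact_mod_cast Nat.succ_lt_succ hab
  set T : ℕ → Set (Fin n → ℝ) := fun k => (fun x => (-(c k)) • (1 : Fin n → ℝ) + x) ⁻¹' K with hT
  have hTmeas : ∀ k, MeasurableSet (T k) := fun k =>
    hKmeas.preimage (measurable_const_add _)
  have hTvol : ∀ k, volume (T k) = volume K := fun k => measure_preimage_add _ _ _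
  have hstep : ∀ (a : Fin n → ℝ) (r : ℝ), a ∈ frontier (upo f q) → 0 < r →
      a + r • (1 : Fin n → ℝ) ∉ frontier (upo f q) := by
    intro a r ha hr hmem
    have h1 : a + r • (1 : Fin n → ℝ) ∈ upo f q :=
      closure_upo_step (by
        have := (isOpen_upo (f := f) q).frontier_eq ▸ ha
        exact this.1) hr
    have h2 : a + r • (1 : Fin n → ℝ) ∉ upo f q := by
      have := (isOpen_upo (f := f) q).frontier_eq ▸ hmem
      exact this.2
    exact h2 h1
  have hdisj : Pairwise (Function.onFun Disjoint T) := by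
    intro k l hkl
    rw [Function.onFun, Set.disjoint_left]
    intro x hxk hxl
    rcases hkl.lt_or_gt with h | h
    · have hgt : c l < c k := hcmono h
      have ha : (-(c k)) • (1 : Fin n → ℝ) + x ∈ frontier (upo f q) := hxk.1
      have hb : (-(c l)) • (1 : Fin n → ℝ) + x ∈ frontier (upo f q) := hxl.1
      have heq : (-(c l)) • (1 : Fin n → ℝ) + x
          = ((-(c k)) • (1 : Fin n → ℝ) + x) + (c k - c l) • (1 : Fin n → ℝ) := by
        funext i; simp [smul_eq_mul]; ring
      exact hstep _ _ ha (by linarith) (heq ▸ hb)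
    · have hgt : c k < c l := hcmono h
      have ha : (-(c l)) • (1 : Fin n → ℝ) + x ∈ frontier (upo f q) := hxl.1
      have hb : (-(c k)) • (1 : Fin n → ℝ) + x ∈ frontier (upo f q) := hxk.1
      have heq : (-(c k)) • (1 : Fin n → ℝ) + x
          = ((-(c l)) • (1 : Fin n → ℝ) + x) + (c l - c k) • (1 : Fin n → ℝ) := by
        funext i; simp [smul_eq_mul]; ring
      exact hstep _ _ ha (by linarith) (heq ▸ hb)
  have hsub : (⋃ k, T k) ⊆ Set.Icc (0 : Fin n → ℝ) 2 := by
    rintro x ⟨s, ⟨k, rfl⟩, hx⟩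
    have h1 : (-(c k)) • (1 : Fin n → ℝ) + x ∈ cube n := hx.2
    obtain ⟨hl, hu⟩ := h1
    constructor
    · intro i
      have := hl i
      simp only [Pi.add_apply, Pi.smul_apply, Pi.one_apply, smul_eq_mul, mul_one,
        Pi.zero_apply] at this ⊢
      have := hcpos k; linarith
    · intro i
      have := hu i
      simp only [Pi.add_apply, Pi.smul_apply, Pi.one_apply, smul_eq_mul, mul_one,
        Pi.one_apply] at this ⊢
      have := hcle k
      show x i ≤ (2 : Fin n → ℝ) i
      have h2 : ((2 : Fin n → ℝ)) i = (2:ℝ) := rfl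
      rw [h2]; linarith
  have hfin : volume (⋃ k, T k) < ⊤ := by
    refine lt_of_le_of_lt (measure_mono hsub) ?_
    have : IsCompact (Set.Icc (0 : Fin n → ℝ) 2) := by
      rw [show (Set.Icc (0:Fin n → ℝ) 2) = Set.univ.pi fun i => Set.Icc 0 2 by
        rw [Set.pi_univ_Icc]; rfl]
      exact isCompact_univ_pi fun i => isCompact_Icc
    exact this.measure_lt_top
  rw [measure_iUnion hdisj hTmeas] at hfin
  simp only [hTvol] at hfin
  by_contra h0
  rw [ENNReal.tsum_const_eq_top_of_ne_zero h0] at hfin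
  exact absurd hfin (lt_irrefl _)

lemma ae_eq_ft (hmc : IsMonoCube n f) :
    f =ᵐ[volume.restrict (cube n)] ft f := by
  have hsub : {x | f x ≠ ft f x} ∩ cube n ⊆ ⋃ q : ℚ, (frontier (upo f (q:ℝ)) ∩ cube n) := by
    rintro x ⟨hne, hxc⟩
    have hlt : ft f x < f x := lt_of_le_of_ne (ft_le hmc hxc) (Ne.symm (by simpa using hne))
    obtain ⟨q, hq1, hq2⟩ := exists_rat_btwn hlt
    refine Set.mem_iUnion.mpr ⟨q, ?_, hxc⟩
    rw [(isOpen_upo (f := f) (q:ℝ)).frontier_eq]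
    constructor
    · have htt : Tendsto (fun k : ℕ => x + (1/(k+1:ℝ)) • (1 : Fin n → ℝ)) atTop (𝓝 x) := by
        rw [tendsto_pi_nhds]
        intro i
        have : Tendsto (fun k : ℕ => x i + 1/(k+1:ℝ)) atTop (𝓝 (x i + 0)) :=
          (tendsto_const_nhds).add tendsto_one_div_add_atTop_nhds_zero_nat
        simpa using this
      refine mem_closure_of_tendsto htt (Eventually.of_forall fun k => ?_)
      exact mem_upo.mpr ⟨x, hxc, hq2, fun i => by
          simp only [Pi.add_apply, Pi.smul_apply, Pi.one_apply, smul_eq_mul, mul_one]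
          have : (0:ℝ) < 1/(k+1) := by positivity
          linarith⟩
    · intro hx
      obtain ⟨y, hyc, hyq, hyx⟩ := mem_upo.mp hx
      exact absurd (lt_of_lt_of_le hyq (le_ft hmc hyc hyx)) (not_lt.mpr hq1.le)
  have hnull : volume ({x | f x ≠ ft f x} ∩ cube n) = 0 :=
    measure_mono_null hsub (by
      refine measure_iUnion_null fun q => frontier_upo_null f (q:ℝ))
  rw [EventuallyEq, ae_iff, Measure.restrict_apply']
  · exact measure_mono_null (by intro x hx; exact hx) hnull
  · exact measurableSet_Icc

lemma ae_mem_essRange {α : Type*} [MeasurableSpace α] (μ : Measure α) (F : α → ℝ) :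
    ∀ᵐ x ∂μ, ∀ r : ℝ, 0 < r → μ {y | |F y - F x| < r} ≠ 0 := by
  set bad : Set (ℚ × ℚ) := {p | μ {x | (p.1:ℝ) < F x ∧ F x < (p.2:ℝ)} = 0} with hbad
  have hnull : μ (⋃ p ∈ bad, {x | (p.1:ℝ) < F x ∧ F x < (p.2:ℝ)}) = 0 :=
    (measure_biUnion_null_iff (Set.to_countable bad)).mpr fun p hp => hp
  rw [← compl_mem_ae_iff] at hnull
  filter_upwards [hnull] with x hx
  intro r hr h0
  apply hx
  obtain ⟨a, ha1, ha2⟩ := exists_rat_btwn (show F x - r < F x by linarith)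
  obtain ⟨b, hb1, hb2⟩ := exists_rat_btwn (show F x < F x + r by linarith)
  refine Set.mem_biUnion (show ((a,b) : ℚ × ℚ) ∈ bad from ?_) ⟨ha2, hb1⟩
  rw [hbad]
  show μ _ = 0
  refine measure_mono_null ?_ h0
  intro y hy
  simp only [Set.mem_setOf_eq] at hy ⊢
  rw [abs_lt]
  constructor <;> linarith [hy.1, hy.2]

lemma mem_cube_perm {x : Fin n → ℝ} (π : Equiv.Perm (Fin n)) (hx : x ∈ cube n) :
    (fun i => x (π i)) ∈ cube n :=
  ⟨fun i => hx.1 (π i), fun i => hx.2 (π i)⟩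

lemma integrable_bdd_mul {α : Type*} [MeasurableSpace α] {μ : Measure α} [IsFiniteMeasure μ]
    {g φ : α → ℝ} (hg : AEStronglyMeasurable (fun x => g x * φ x) μ) {B C : ℝ}
    (hB : ∀ᵐ x ∂μ, |g x| ≤ B) (hC : ∀ᵐ x ∂μ, |φ x| ≤ C) :
    Integrable (fun x => g x * φ x) μ := by
  refine (integrable_const (B * C)).mono' hg ?_
  filter_upwards [hB, hC] with x h1 h2
  rw [Real.norm_eq_abs, abs_mul]
  exact mul_le_mul h1 h2 (abs_nonneg _) (le_trans (abs_nonneg _) h1)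

lemma finiteOnCube : IsFiniteMeasure (volume.restrict (cube n)) := by
  constructor
  rw [Measure.restrict_apply_univ]
  exact cube_compact.measure_lt_top

end Stmt4Aux

/-- every extreme point of the set of symmetric monotone functions
subject to `m` linear inequality constraints is a.e. equal to a mixture of at most
`m + 1` indicator functions of nested symmetric up-sets. -/
theorem stmt4 (n m : ℕ) (hn : 1 ≤ n)
    (φ : Fin m → (Fin n → ℝ) → ℝ)
    (hmeas : ∀ j, Measurable (φ j))
    (hbdd : ∀ j, ∃ C : ℝ, ∀ᵐ x ∂(volume.restrict (cube n)), |φ j x| ≤ C)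
    (η : Fin m → ℝ)
    (f : (Fin n → ℝ) → ℝ)
    (hf : ExtremePtF n
      {g | IsMonoCube n g ∧ SymFun n g ∧
        ∀ j, (∫ x in cube n, g x * φ j x) ≤ η j} f) :
    ∃ (A : Fin (m + 1) → Set (Fin n → ℝ)) (lam : Fin (m + 1) → ℝ),
      (∀ j, UpSetIn n (A j)) ∧
      (∀ j, SymSet n (A j)) ∧
      (∀ j k, j ≤ k → A j ⊆ A k) ∧
      (∀ j, 0 ≤ lam j) ∧ (∑ j, lam j) = 1 ∧
      f =ᵐ[volume.restrict (cube n)] fun x => ∑ j, lam j * (A j).indicator 1 x := by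
  classical
  obtain ⟨hfS, hfExt⟩ := hf
  obtain ⟨hmc, hsym, hcon⟩ := hfS
  set μ := volume.restrict (cube n) with hμdef
  haveI : IsFiniteMeasure μ := Stmt4Aux.finiteOnCube
  set F := Stmt4Aux.ft f with hFdef
  have hFmeas : Measurable F := Stmt4Aux.measurable_ft hmc
  have haeF : f =ᵐ[μ] F := Stmt4Aux.ae_eq_ft hmc
  have haeE : ∀ᵐ x ∂μ, ∀ r : ℝ, 0 < r → μ {y | |F y - F x| < r} ≠ 0 :=
    Stmt4Aux.ae_mem_essRange μ F
  by_cases hE : ∃ t : Fin (m+1) → ℝ, StrictMono t ∧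
      ∀ i, (∀ r : ℝ, 0 < r → μ {y | |F y - t i| < r} ≠ 0) ∧ t i ∈ Set.Ioo (0:ℝ) 1
  · -- Case B : too many essential values, contradiction with extremality
    exfalso
    obtain ⟨t, htmono, htE⟩ := hE
    -- choose a separation size δ
    set D : Finset ℝ := insert (t 0) (insert (1 - t (Fin.last m))
      (((Finset.univ : Finset (Fin (m+1) × Fin (m+1))).filter (fun p => p.1 ≠ p.2)).image
        (fun p => |t p.1 - t p.2|))) with hDdef
    have hDne : D.Nonempty := ⟨t 0, Finset.mem_insert_self _ _⟩
    set δ : ℝ := D.min' hDne / 4 with hdel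
    have hDpos : ∀ y ∈ D, 0 < y := by
      intro y hy
      rcases Finset.mem_insert.mp hy with rfl | hy
      · exact (htE 0).2.1
      rcases Finset.mem_insert.mp hy with rfl | hy
      · have h2 := (htE (Fin.last m)).2.2
        linarith
      · obtain ⟨p, hp, rfl⟩ := Finset.mem_image.mp hy
        have hne : t p.1 ≠ t p.2 := fun hc => (Finset.mem_filter.mp hp).2 (htmono.injective hc)
        exact abs_pos.mpr (sub_ne_zero.mpr hne)
    have hδpos : 0 < δ := by
      have := hDpos _ (Finset.min'_mem D hDne)
      rw [hdel]; linarith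
    have hmin_le : ∀ y ∈ D, D.min' hDne ≤ y := fun y hy => Finset.min'_le D y hy
    have hδt0 : ∀ i, 4 * δ ≤ t i := by
      intro i
      have h1 : D.min' hDne ≤ t 0 := hmin_le _ (Finset.mem_insert_self _ _)
      have h2 : t 0 ≤ t i := htmono.monotone (Fin.zero_le i)
      rw [hdel]; linarith
    have hδt1 : ∀ i, t i ≤ 1 - 4 * δ := by
      intro i
      have h1 : D.min' hDne ≤ 1 - t (Fin.last m) :=
        hmin_le _ (Finset.mem_insert_of_mem (Finset.mem_insert_self _ _))
      have h2 : t i ≤ t (Fin.last m) := htmono.monotone (Fin.le_last i)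
      rw [hdel]; linarith
    have hδgap : ∀ i i', i ≠ i' → 4 * δ ≤ |t i - t i'| := by
      intro i i' hne
      have hmem : |t i - t i'| ∈ D := by
        refine Finset.mem_insert_of_mem (Finset.mem_insert_of_mem ?_)
        exact Finset.mem_image.mpr ⟨(i, i'), Finset.mem_filter.mpr ⟨Finset.mem_univ _, hne⟩, rfl⟩
      have := hmin_le _ hmem
      rw [hdel]; linarith
    -- tent functions
    set ψ : Fin (m+1) → ℝ → ℝ := fun i u => max 0 (δ/2 - |u - t i|) with hψdef
    have hψ01 : ∀ i u, 0 ≤ ψ i u ∧ ψ i u ≤ δ/2 := by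
      intro i u
      refine ⟨le_max_left _ _, max_le (by linarith) (by
        have := abs_nonneg (u - t i); linarith)⟩
    have hψlip : ∀ i u v, |ψ i u - ψ i v| ≤ |u - v| := by
      intro i u v
      have h1 : |max 0 (δ/2 - |u - t i|) - max 0 (δ/2 - |v - t i|)|
          ≤ |(δ/2 - |u - t i|) - (δ/2 - |v - t i|)| := by
        rw [max_comm 0 (δ/2 - |u - t i|), max_comm 0 (δ/2 - |v - t i|)]
        exact abs_max_sub_max_le_abs _ _ _
      refine le_trans h1 ?_
      rw [show (δ/2 - |u - t i|) - (δ/2 - |v - t i|) = |v - t i| - |u - t i| by ring]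
      refine le_trans (abs_abs_sub_abs_le_abs_sub _ _) ?_
      rw [show (v - t i) - (u - t i) = v - u by ring, abs_sub_comm]
    have hψsupp : ∀ i u, ψ i u ≠ 0 → |u - t i| < δ/2 := by
      intro i u hne
      by_contra hge
      push_neg at hge
      exact hne (max_eq_left (by linarith))
    have hψpos : ∀ i u, |u - t i| ≤ δ/4 → δ/4 ≤ ψ i u := by
      intro i u hle
      exact le_trans (by linarith) (le_max_right _ _)
    have hψFmeas : ∀ i, Measurable fun x => ψ i (F x) := by
      intro i
      have hcont : Continuous (ψ i) :=
        continuous_const.max (continuous_const.sub ((continuous_id.sub continuous_const).abs))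
      exact hcont.measurable.comp hFmeas
    -- the matrix of pairings and a kernel vector
    set M : Matrix (Fin m) (Fin (m+1)) ℝ := fun j i => ∫ x, ψ i (F x) * φ j x ∂μ with hMdef
    have hMint : ∀ (j : Fin m) (i : Fin (m+1)), Integrable (fun x => ψ i (F x) * φ j x) μ := by
      intro j i
      obtain ⟨C, hC⟩ := hbdd j
      refine Stmt4Aux.integrable_bdd_mul (B := δ/2) (((hψFmeas i).mul (hmeas j)).aestronglyMeasurable)
        (ae_of_all _ fun x => ?_) hC
      rw [abs_of_nonneg (hψ01 i (F x)).1]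
      exact (hψ01 i (F x)).2
    have hnoninj : ¬ Function.Injective (Matrix.toLin' M) := by
      intro hinj
      have hle := LinearMap.finrank_le_finrank_of_injective hinj
      simp only [Module.finrank_pi, Fintype.card_fin] at hle
      omega
    rw [Function.not_injective_iff] at hnoninj
    obtain ⟨a, b, hab, habne⟩ := hnoninj
    set c : Fin (m+1) → ℝ := a - b with hcdef
    have hc0 : c ≠ 0 := sub_ne_zero.mpr habne
    have hMc : M.mulVec c = 0 := by
      have h1 : Matrix.toLin' M c = 0 := by rw [hcdef, map_sub, hab, sub_self]
      rwa [Matrix.toLin'_apply] at h1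
    set K : ℝ := ∑ i, |c i| with hKdef
    have hK0 : 0 ≤ K := Finset.sum_nonneg fun i _ => abs_nonneg _
    set ε : ℝ := (K + 1)⁻¹ with hεdef
    have hε : 0 < ε := by rw [hεdef]; positivity
    have hεK : ε * K ≤ 1 := by
      rw [hεdef, inv_mul_le_iff₀ (by positivity)]
      linarith
    set Ψ : ℝ → ℝ := fun u => ∑ i, c i * ψ i u with hΨdef
    have hΨbd : ∀ u, |Ψ u| ≤ K * (δ/2) := by
      intro u
      calc |Ψ u| ≤ ∑ i, |c i * ψ i u| := Finset.abs_sum_le_sum_abs _ _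
      _ ≤ ∑ i, |c i| * (δ/2) := by
          refine Finset.sum_le_sum fun i _ => ?_
          rw [abs_mul]
          refine mul_le_mul_of_nonneg_left ?_ (abs_nonneg _)
          rw [abs_of_nonneg (hψ01 i u).1]
          exact (hψ01 i u).2
      _ = K * (δ/2) := by rw [hKdef, Finset.sum_mul]
    have hΨlip : ∀ u v, |Ψ u - Ψ v| ≤ K * |u - v| := by
      intro u v
      calc |Ψ u - Ψ v| = |∑ i, (c i * ψ i u - c i * ψ i v)| := by
            rw [hΨdef]
            simp only []
            rw [Finset.sum_sub_distrib]
      _ ≤ ∑ i, |c i * ψ i u - c i * ψ i v| := Finset.abs_sum_le_sum_abs _ _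
      _ ≤ ∑ i, |c i| * |u - v| := by
          refine Finset.sum_le_sum fun i _ => ?_
          rw [← mul_sub, abs_mul]
          exact mul_le_mul_of_nonneg_left (hψlip i u v) (abs_nonneg _)
      _ = K * |u - v| := by rw [hKdef, Finset.sum_mul]
    have hΨsupp : ∀ u, Ψ u ≠ 0 → δ/2 < u ∧ u < 1 - δ/2 := by
      intro u hne
      have hne' : (∑ i, c i * ψ i u) ≠ 0 := by rwa [hΨdef] at hne
      obtain ⟨i, _, hi⟩ := Finset.exists_ne_zero_of_sum_ne_zero hne'
      have hψne : ψ i u ≠ 0 := fun hc => hi (by rw [hc, mul_zero])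
      have h1 := hψsupp i u hψne
      have h2 := hδt0 i
      have h3 := hδt1 i
      rw [abs_lt] at h1
      constructor <;> linarith [h1.1, h1.2]
    -- the perturbed functions g and h
    set g : (Fin n → ℝ) → ℝ := fun x => f x + ε * Ψ (f x) with hgdef
    set h : (Fin n → ℝ) → ℝ := fun x => f x - ε * Ψ (f x) with hhdef
    have hpair : ∀ u v, u ≤ v →
        (u + ε * Ψ u ≤ v + ε * Ψ v ∧ u - ε * Ψ u ≤ v - ε * Ψ v) := by
      intro u v huv
      have h1 : |ε * (Ψ v - Ψ u)| ≤ v - u := by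
        rw [abs_mul, abs_of_pos hε]
        calc ε * |Ψ v - Ψ u| ≤ ε * (K * |v - u|) :=
              mul_le_mul_of_nonneg_left (hΨlip v u) hε.le
        _ = (ε * K) * |v - u| := by ring
        _ ≤ 1 * |v - u| := mul_le_mul_of_nonneg_right hεK (abs_nonneg _)
        _ = v - u := by rw [one_mul, abs_of_nonneg (by linarith)]
      rw [abs_le] at h1
      constructor <;> linarith [h1.1, h1.2]
    have hrange : ∀ u, 0 ≤ u → u ≤ 1 →
        (0 ≤ u + ε * Ψ u ∧ u + ε * Ψ u ≤ 1 ∧ 0 ≤ u - ε * Ψ u ∧ u - ε * Ψ u ≤ 1) := by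
      intro u h0 h1
      by_cases hΨ0 : Ψ u = 0
      · rw [hΨ0, mul_zero]
        simp only [add_zero, sub_zero]
        exact ⟨h0, h1, h0, h1⟩
      · have hsupp := hΨsupp u hΨ0
        have hb : |ε * Ψ u| ≤ δ/2 := by
          rw [abs_mul, abs_of_pos hε]
          calc ε * |Ψ u| ≤ ε * (K * (δ/2)) := mul_le_mul_of_nonneg_left (hΨbd u) hε.le
          _ = (ε * K) * (δ/2) := by ring
          _ ≤ 1 * (δ/2) := mul_le_mul_of_nonneg_right hεK (by linarith)
          _ = δ/2 := one_mul _
        rw [abs_le] at hb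
        refine ⟨by linarith [hsupp.1, hb.1], by linarith [hsupp.2, hb.2],
          by linarith [hsupp.1, hb.2], by linarith [hsupp.2, hb.1]⟩
    -- g and h are in the constraint set
    have hgmc : IsMonoCube n g := by
      constructor
      · intro x hx
        have := hrange (f x) (hmc.1 x hx).1 (hmc.1 x hx).2
        exact ⟨this.1, this.2.1⟩
      · intro x hx y hy hxy
        exact (hpair (f x) (f y) (hmc.2 x hx y hy hxy)).1
    have hhmc : IsMonoCube n h := by
      constructor
      · intro x hx
        have := hrange (f x) (hmc.1 x hx).1 (hmc.1 x hx).2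
        exact ⟨this.2.2.1, this.2.2.2⟩
      · intro x hx y hy hxy
        exact (hpair (f x) (f y) (hmc.2 x hx y hy hxy)).2
    have hgsym : SymFun n g := by
      intro π x hx
      show f (fun i => x (π i)) + ε * Ψ (f (fun i => x (π i))) = f x + ε * Ψ (f x)
      rw [hsym π x hx]
    have hhsym : SymFun n h := by
      intro π x hx
      show f (fun i => x (π i)) - ε * Ψ (f (fun i => x (π i))) = f x - ε * Ψ (f x)
      rw [hsym π x hx]
    -- integrals
    have hFbd : ∀ᵐ x ∂μ, |F x| ≤ 1 := ae_of_all _ fun x => by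
      rw [abs_of_nonneg (Stmt4Aux.ft_nonneg hmc x)]
      exact Stmt4Aux.ft_le_one hmc x
    have hFint : ∀ j, Integrable (fun x => F x * φ j x) μ := by
      intro j
      obtain ⟨C, hC⟩ := hbdd j
      exact Stmt4Aux.integrable_bdd_mul ((hFmeas.mul (hmeas j)).aestronglyMeasurable) hFbd hC
    have hint_f_eq : ∀ j, ∫ x, f x * φ j x ∂μ = ∫ x, F x * φ j x ∂μ := by
      intro j
      refine integral_congr_ae (haeF.mono fun x hx => ?_)
      show f x * φ j x = F x * φ j x
      rw [hx]
    have hΨexp : ∀ j : Fin m,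
        (fun x => Ψ (F x) * φ j x) = fun x => ∑ i, c i * (ψ i (F x) * φ j x) := by
      intro j
      funext x
      show (∑ i, c i * ψ i (F x)) * φ j x = _
      rw [Finset.sum_mul]
      exact Finset.sum_congr rfl fun i _ => by ring
    have hΨFint : ∀ j, Integrable (fun x => Ψ (F x) * φ j x) μ := by
      intro j
      rw [hΨexp j]
      exact integrable_finset_sum _ fun i _ => (hMint j i).const_mul (c i)
    have hΨFzero : ∀ j, ∫ x, Ψ (F x) * φ j x ∂μ = 0 := by
      intro j
      rw [hΨexp j, integral_finset_sum _ fun i _ => (hMint j i).const_mul (c i)]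
      have hterm : ∀ i : Fin (m+1), ∫ x, c i * (ψ i (F x) * φ j x) ∂μ = M j i * c i := by
        intro i
        rw [integral_const_mul, mul_comm]
      rw [Finset.sum_congr rfl fun i _ => hterm i]
      have h3 := congrFun hMc j
      simpa [Matrix.mulVec, dotProduct] using h3
    have hgcon : ∀ j, ∫ x, g x * φ j x ∂μ ≤ η j := by
      intro j
      have heq : ∫ x, g x * φ j x ∂μ = ∫ x, (F x + ε * Ψ (F x)) * φ j x ∂μ := by
        refine integral_congr_ae (haeF.mono fun x hx => ?_)
        show g x * φ j x = _
        show (f x + ε * Ψ (f x)) * φ j x = _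
        rw [hx]
      have hsplit : (fun x => (F x + ε * Ψ (F x)) * φ j x)
          = fun x => F x * φ j x + ε * (Ψ (F x) * φ j x) := by
        funext x; ring
      rw [heq, hsplit, integral_add (hFint j) ((hΨFint j).const_mul ε), integral_const_mul,
        hΨFzero j, mul_zero, add_zero, ← hint_f_eq j]
      exact hcon j
    have hhcon : ∀ j, ∫ x, h x * φ j x ∂μ ≤ η j := by
      intro j
      have heq : ∫ x, h x * φ j x ∂μ = ∫ x, (F x - ε * Ψ (F x)) * φ j x ∂μ := by
        refine integral_congr_ae (haeF.mono fun x hx => ?_)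
        show h x * φ j x = _
        show (f x - ε * Ψ (f x)) * φ j x = _
        rw [hx]
      have hsplit : (fun x => (F x - ε * Ψ (F x)) * φ j x)
          = fun x => F x * φ j x - ε * (Ψ (F x) * φ j x) := by
        funext x; ring
      rw [heq, hsplit, integral_sub (hFint j) ((hΨFint j).const_mul ε), integral_const_mul,
        hΨFzero j, mul_zero, sub_zero, ← hint_f_eq j]
      exact hcon j
    have hfeq : f =ᵐ[μ] fun x => (1/2 : ℝ) * g x + (1 - 1/2) * h x := by
      refine ae_of_all _ fun x => ?_
      show f x = (1/2 : ℝ) * (f x + ε * Ψ (f x)) + (1 - 1/2) * (f x - ε * Ψ (f x))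
      ring
    have hgh := hfExt g ⟨hgmc, hgsym, hgcon⟩ h ⟨hhmc, hhsym, hhcon⟩ (1/2)
      (by norm_num) (by norm_num) hfeq
    obtain ⟨i, hci⟩ := Function.ne_iff.mp hc0
    have hP : μ {y | |F y - t i| < δ/4} ≠ 0 := (htE i).1 (δ/4) (by linarith)
    apply hP
    have hnull2 : μ {x | ¬ (Ψ (F x) = 0)} = 0 := by
      have h1 : ∀ᵐ x ∂μ, Ψ (F x) = 0 := by
        filter_upwards [hgh, haeF] with x hgx hfx
        have h2 : f x + ε * Ψ (f x) = f x - ε * Ψ (f x) := hgx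
        have h3 : ε * Ψ (f x) = 0 := by linarith
        have h4 : Ψ (f x) = 0 := (mul_eq_zero.mp h3).resolve_left (ne_of_gt hε)
        rwa [hfx] at h4
      exact ae_iff.mp h1
    refine measure_mono_null ?_ hnull2
    intro x hx
    simp only [Set.mem_setOf_eq] at hx ⊢
    have hterm0 : ∀ i' ∈ (Finset.univ : Finset (Fin (m+1))), i' ≠ i →
        c i' * ψ i' (F x) = 0 := by
      intro i' _ hne
      have hgap := hδgap i' i hne
      have htri : |t i' - t i| ≤ |t i' - F x| + |F x - t i| := abs_sub_le _ _ _
      rw [abs_sub_comm (t i') (F x)] at htri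
      have hfar : ¬ (|F x - t i'| < δ/2) := by intro hcon; linarith
      have hz : ψ i' (F x) = 0 := by
        by_contra hcz
        exact hfar (hψsupp i' (F x) hcz)
      rw [hz, mul_zero]
    have hsum : Ψ (F x) = c i * ψ i (F x) := by
      show (∑ i', c i' * ψ i' (F x)) = _
      exact Finset.sum_eq_single i hterm0 (fun hno => absurd (Finset.mem_univ i) hno)
    rw [hsum]
    refine mul_ne_zero hci (ne_of_gt ?_)
    have := hψpos i (F x) (le_of_lt hx)
    linarith
  · -- Case A : few essential values
    set S : Set ℝ := {v | (∀ r : ℝ, 0 < r → μ {y | |F y - v| < r} ≠ 0) ∧ v ∈ Set.Ioo (0:ℝ) 1}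
      with hSdef
    have hcard : ∀ u : Finset ℝ, ↑u ⊆ S → u.card ≤ m := by
      intro u hu
      by_contra hlt
      push_neg at hlt
      obtain ⟨v, hvu, hvcard⟩ := Finset.exists_subset_card_eq (show m + 1 ≤ u.card from hlt)
      refine hE ⟨fun i => (v.orderIsoOfFin hvcard i : ℝ), ?_, ?_⟩
      · intro a b hab
        exact Subtype.coe_lt_coe.mpr ((v.orderIsoOfFin hvcard).strictMono hab)
      · intro i
        have hm : ((v.orderIsoOfFin hvcard i : ℝ)) ∈ v := (v.orderIsoOfFin hvcard i).2
        exact hu (hvu hm)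
    have hSfin : S.Finite := by
      by_contra hinf
      obtain ⟨u, hu, hucard⟩ := Set.Infinite.exists_subset_card_eq hinf (m+1)
      have := hcard u hu
      omega
    set T : Finset ℝ := insert 0 (insert 1 hSfin.toFinset) with hTdef
    have h0T : (0:ℝ) ∈ T := Finset.mem_insert_self _ _
    have h1T : (1:ℝ) ∈ T := Finset.mem_insert_of_mem (Finset.mem_insert_self _ _)
    have hTsub : ∀ v ∈ T, 0 ≤ v ∧ v ≤ 1 := by
      intro v hv
      rcases Finset.mem_insert.mp hv with rfl | hv
      · norm_num
      rcases Finset.mem_insert.mp hv with rfl | hv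
      · norm_num
      · have hmem := (hSfin.mem_toFinset.mp hv).2
        exact ⟨hmem.1.le, hmem.2.le⟩
    have hTcard : T.card ≤ m + 2 := by
      rw [hTdef]
      have h1 : hSfin.toFinset.card ≤ m := hcard _ (by simp)
      have h2 := Finset.card_insert_le (1:ℝ) hSfin.toFinset
      have h3 := Finset.card_insert_le (0:ℝ) (insert 1 hSfin.toFinset)
      omega
    have hT1 : 1 ≤ T.card := Finset.card_pos.mpr ⟨0, h0T⟩
    set kT := T.card with hkT
    set e := T.orderIsoOfFin rfl with hedef
    set w : ℕ → ℝ := fun i => (e ⟨min i (kT - 1), by omega⟩ : ℝ) with hwdef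
    have hwmono : Monotone w := by
      intro i j hij
      have hle : (⟨min i (kT-1), by omega⟩ : Fin kT) ≤ ⟨min j (kT-1), by omega⟩ := by
        rw [Fin.mk_le_mk]
        omega
      exact Subtype.coe_le_coe.mpr (e.monotone hle)
    have hwT : ∀ i, w i ∈ T := fun i => (e _).2
    have hw0 : w 0 = 0 := by
      obtain ⟨i0, hi0⟩ := e.surjective ⟨0, h0T⟩
      have h1 : w 0 ≤ 0 := by
        have hle : (⟨min 0 (kT-1), by omega⟩ : Fin kT) ≤ i0 := by
          rw [Fin.le_def]
          simp
        calc w 0 ≤ (e i0 : ℝ) := Subtype.coe_le_coe.mpr (e.monotone hle)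
        _ = 0 := by rw [hi0]
      exact le_antisymm h1 (hTsub _ (hwT 0)).1
    have hwtop : w (m+1) = 1 := by
      obtain ⟨i1, hi1⟩ := e.surjective ⟨1, h1T⟩
      have h1 : (1:ℝ) ≤ w (m+1) := by
        have hle : i1 ≤ (⟨min (m+1) (kT-1), by omega⟩ : Fin kT) := by
          rw [Fin.le_def]
          have := i1.isLt
          simp only []
          omega
        calc (1:ℝ) = (e i1 : ℝ) := by rw [hi1]
        _ ≤ w (m+1) := Subtype.coe_le_coe.mpr (e.monotone hle)
      exact le_antisymm (hTsub _ (hwT (m+1))).2 h1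
    have hwrange : ∀ v, v ∈ T → ∃ i, i ≤ m + 1 ∧ w i = v := by
      intro v hv
      obtain ⟨i, hi⟩ := e.surjective ⟨v, hv⟩
      refine ⟨i.val, by have := i.isLt; omega, ?_⟩
      have hfineq : (⟨min i.val (kT-1), by omega⟩ : Fin kT) = i := by
        apply Fin.ext
        simp only []
        have := i.isLt
        omega
      show (e ⟨min i.val (kT-1), by omega⟩ : ℝ) = v
      rw [hfineq, hi]
    -- the up-sets and weights
    refine ⟨fun j => {x | x ∈ cube n ∧ w (m + 1 - (j:ℕ)) ≤ f x},
      fun j => w (m + 1 - (j:ℕ)) - w (m - (j:ℕ)), ?_, ?_, ?_, ?_, ?_, ?_⟩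
    · intro j
      exact ⟨fun x hx => hx.1,
        fun x hx y hy hxy => ⟨hy, le_trans hx.2 (hmc.2 x hx.1 y hy hxy)⟩⟩
    · intro j π x hx
      constructor
      · intro hxA
        exact ⟨Stmt4Aux.mem_cube_perm π hx, by rw [hsym π x hx]; exact hxA.2⟩
      · intro hxA
        refine ⟨hx, ?_⟩
        rw [← hsym π x hx]
        exact hxA.2
    · intro j k hjk x hx
      refine ⟨hx.1, le_trans (hwmono ?_) hx.2⟩
      have : (j:ℕ) ≤ (k:ℕ) := hjk
      omega
    · intro j
      have h1 : (m : ℕ) - (j:ℕ) ≤ m + 1 - (j:ℕ) := by omega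
      have h2 := hwmono h1
      show (0:ℝ) ≤ w (m + 1 - (j:ℕ)) - w (m - (j:ℕ))
      linarith
    · rw [Fin.sum_univ_eq_sum_range (fun i => w (m + 1 - i) - w (m - i)) (m+1)]
      have hcongr : ∀ i ∈ Finset.range (m+1),
          w (m + 1 - i) - w (m - i) = (fun i => w (i+1) - w i) (m + 1 - 1 - i) := by
        intro i hi
        have hi' : i ≤ m := by
          have := Finset.mem_range.mp hi
          omega
        simp only []
        congr 2 <;> omega
      rw [Finset.sum_congr rfl hcongr, Finset.sum_range_reflect (fun i => w (i+1) - w i) (m+1),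
        Finset.sum_range_sub, hw0, hwtop]
      ring
    · filter_upwards [haeF, haeE, ae_restrict_mem (Stmt4Aux.cube_measurable (n := n))]
        with x hfx hEx hxc
      -- f x lies in T
      have hfT : f x ∈ T := by
        have h01 := hmc.1 x hxc
        by_cases ha0 : f x = 0
        · rw [ha0]; exact h0T
        by_cases ha1 : f x = 1
        · rw [ha1]; exact h1T
        · have hioo : f x ∈ Set.Ioo (0:ℝ) 1 :=
            ⟨lt_of_le_of_ne h01.1 (Ne.symm ha0), lt_of_le_of_ne h01.2 ha1⟩
          have hfE : ∀ r : ℝ, 0 < r → μ {y | |F y - f x| < r} ≠ 0 := by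
            rw [hfx]
            exact hEx
          have hfS : f x ∈ S := ⟨hfE, hioo⟩
          exact Finset.mem_insert_of_mem (Finset.mem_insert_of_mem (hSfin.mem_toFinset.mpr hfS))
      have h0fx : (0:ℝ) ≤ f x := (hmc.1 x hxc).1
      -- indicator values
      have hind : ∀ j : Fin (m+1),
          Set.indicator {x | x ∈ cube n ∧ w (m + 1 - (j:ℕ)) ≤ f x} (1 : (Fin n → ℝ) → ℝ) x
          = if w (m + 1 - (j:ℕ)) ≤ f x then 1 else 0 := by
        intro j
        by_cases hc : w (m + 1 - (j:ℕ)) ≤ f x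
        · rw [Set.indicator_of_mem
            (show x ∈ {x | x ∈ cube n ∧ w (m + 1 - (j:ℕ)) ≤ f x} from ⟨hxc, hc⟩)]
          simp [hc]
        · rw [Set.indicator_of_notMem
            (show x ∉ {x | x ∈ cube n ∧ w (m + 1 - (j:ℕ)) ≤ f x} from fun hmem => hc hmem.2)]
          simp [hc]
      have hsum1 : ∑ j : Fin (m+1),
          (w (m + 1 - (j:ℕ)) - w (m - (j:ℕ))) *
            Set.indicator {x | x ∈ cube n ∧ w (m + 1 - (j:ℕ)) ≤ f x} (1 : (Fin n → ℝ) → ℝ) x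
          = ∑ i ∈ Finset.range (m+1),
            (w (m + 1 - i) - w (m - i)) * (if w (m + 1 - i) ≤ f x then 1 else 0) := by
        rw [← Fin.sum_univ_eq_sum_range
          (fun i => (w (m + 1 - i) - w (m - i)) * (if w (m + 1 - i) ≤ f x then 1 else 0)) (m+1)]
        exact Finset.sum_congr rfl fun j _ => by rw [hind j]
      have hsum2 : ∑ i ∈ Finset.range (m+1),
          (w (m + 1 - i) - w (m - i)) * (if w (m + 1 - i) ≤ f x then 1 else 0)
          = ∑ i ∈ Finset.range (m+1), (w (i+1) - w i) * (if w (i+1) ≤ f x then 1 else 0) := by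
        have hcongr : ∀ i ∈ Finset.range (m+1),
            (w (m + 1 - i) - w (m - i)) * (if w (m + 1 - i) ≤ f x then 1 else 0)
            = (fun i => (w (i+1) - w i) * (if w (i+1) ≤ f x then 1 else 0)) (m + 1 - 1 - i) := by
          intro i hi
          have hi' : i ≤ m := by
            have := Finset.mem_range.mp hi
            omega
          simp only []
          have h1 : m + 1 - 1 - i + 1 = m + 1 - i := by omega
          have h2 : m + 1 - 1 - i = m - i := by omega
          rw [h1, h2]
        rw [Finset.sum_congr rfl hcongr,
          Finset.sum_range_reflect (fun i => (w (i+1) - w i) * (if w (i+1) ≤ f x then 1 else 0)) (m+1)]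
      set istar := Nat.findGreatest (fun i => w i ≤ f x) (m+1) with histar
      have hP0 : w 0 ≤ f x := by rw [hw0]; exact h0fx
      have hPstar : w istar ≤ f x :=
        Nat.findGreatest_spec (P := fun i => w i ≤ f x) (Nat.zero_le _)
          (show (fun i => w i ≤ f x) 0 from hP0)
      obtain ⟨i0, hi0le, hwi0⟩ := hwrange (f x) hfT
      have hi0star : i0 ≤ istar :=
        Nat.le_findGreatest (P := fun i => w i ≤ f x) hi0le (le_of_eq hwi0)
      have hstar_eq : w istar = f x :=
        le_antisymm hPstar (by rw [← hwi0]; exact hwmono hi0star)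
      have histarle : istar ≤ m + 1 := Nat.findGreatest_le _
      have hsum3 : ∑ i ∈ Finset.range (m+1), (w (i+1) - w i) * (if w (i+1) ≤ f x then 1 else 0)
          = ∑ i ∈ Finset.range istar, (w (i+1) - w i) * (if w (i+1) ≤ f x then 1 else 0) := by
        refine (Finset.sum_subset (Finset.range_subset_range.mpr (by omega)) ?_).symm
        intro i hi hni
        have h1 : istar ≤ i := by
          have := Finset.mem_range.not.mp hni
          omega
        have h2 : ¬ (w (i+1) ≤ f x) := by
          intro hcon
          have := Nat.le_findGreatest (P := fun i => w i ≤ f x) (by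
            have := Finset.mem_range.mp hi
            omega : i + 1 ≤ m + 1) hcon
          omega
        simp [h2]
      have hsum4 : ∑ i ∈ Finset.range istar, (w (i+1) - w i) * (if w (i+1) ≤ f x then 1 else 0)
          = ∑ i ∈ Finset.range istar, (w (i+1) - w i) := by
        refine Finset.sum_congr rfl fun i hi => ?_
        have hle : i + 1 ≤ istar := Finset.mem_range.mp hi
        have : w (i+1) ≤ f x := le_trans (hwmono hle) hPstar
        simp [this]
      show f x = _
      rw [hsum1, hsum2, hsum3, hsum4, Finset.sum_range_sub, hw0, hstar_eq]
      ring
end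
end
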